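/- Let Θ̂ = [Â B̂] and Θ* = [A* B*] be matrices in ℝ^{n×(n+m)}, K ∈ ℝ^{m×n} with ‖K‖_F ≤ K̄, and suppose there exist C ≥ 1 and ρ ∈ (0,1) with ‖(Â + B̂K)^k‖_F ≤ C ρ^k and ‖(A* + B*K)^k‖_F ≤ C ρ^k for all k ≥ 0. Let σ_w > 0, and for Θ ∈ {Θ̂, Θ*} define Σ_Θ := σ_w² ∑_{k=0}^∞ (A+BK)^k ((A+BK)ᵀ)^k and Σ̃_Θ := [I; K] Σ_Θ [I; K]ᵀ. Let Q and R be real symmetric matrices of sizes n and m, let λ > 0, D ≥ 0, and assume ‖Θ̂ − Θ*‖_F ≤ 2/λ and ‖Θ*‖_F ≤ D + 1/λ. Then | tr((Q + Kᵀ R K)(Σ_{Θ*} − Σ_{Θ̂})) | ≤ c · tr(Σ̃_{Θ̂}), where c := (1/λ)(D + 2/λ) · 4C²(‖Q‖_F + K̄² ‖R‖_F)/(1−ρ²). -/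

import Mathlib

/-!
Both covariances solve Stein (discrete Lyapunov) equations `Σ = L Σ Lᵀ + σ_w² I` with
`L = Θ [I; K]`. Subtracting them, `Σ* - Σ̂` solves the Stein equation of `L* = A* + B* K` with
forcing term `Δ Σ̃ Θ*ᵀ + Θ̂ Σ̃ Δᵀ`, where `Δ = Θ* - Θ̂` and `Σ̃ = Σ̃_Θ̂`; hence
`Σ* - Σ̂ = ∑ₖ L*ᵏ (Δ Σ̃ Θ*ᵀ + Θ̂ Σ̃ Δᵀ) (L*ᵏ)ᵀ`. Since `Σ̃ ⪰ 0`, `|tr (X Σ̃)| ≤ ‖X‖_F tr Σ̃`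
bounds each term of `tr ((Q + KᵀRK) (Σ* - Σ̂))` by a multiple of `‖L*ᵏ‖_F² ≤ C² ρ²ᵏ`, and the
geometric series gives the factor `C² / (1 - ρ²)`.
-/

open Matrix MeasureTheory ProbabilityTheory Filter

/-- Frobenius norm of a real matrix. -/
noncomputable def frob {α β : Type*} [Fintype α] [Fintype β] (A : Matrix α β ℝ) : ℝ :=
  Real.sqrt (∑ i, ∑ j, (A i j) ^ 2)

/-- Spectral norm (largest singular value) of a real matrix. -/
noncomputable def spec {α β : Type*} [Fintype α] [Fintype β] [DecidableEq β]
    (A : Matrix α β ℝ) : ℝ :=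
  ‖LinearMap.toContinuousLinearMap (Matrix.toEuclideanLin A)‖

/-- The positive semidefinite square root of a positive semidefinite real matrix
(junk value `0` if the matrix is not positive semidefinite). -/
noncomputable def msqrt {α : Type*} [Fintype α] [DecidableEq α]
    (M : Matrix α α ℝ) : Matrix α α ℝ :=
  open scoped Classical in
  if h : M.PosSemidef then
    (h.1.eigenvectorUnitary : Matrix α α ℝ) * diagonal (Real.sqrt ∘ h.1.eigenvalues) *
      (star h.1.eigenvectorUnitary : Matrix α α ℝ)
  else 0

/-- Euclidean norm of a real vector. -/
noncomputable def vnorm {α : Type*} [Fintype α] (v : α → ℝ) : ℝ :=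
  Real.sqrt (∑ i, (v i) ^ 2)

/-- Closed-loop stationary state covariance
`Σ_Θ = σ_w² ∑_{k=0}^∞ (A+BK)^k ((A+BK)ᵀ)^k`. -/
noncomputable def clCov {n m : ℕ} (A : Matrix (Fin n) (Fin n) ℝ)
    (B : Matrix (Fin n) (Fin m) ℝ) (K : Matrix (Fin m) (Fin n) ℝ) (σw : ℝ) :
    Matrix (Fin n) (Fin n) ℝ :=
  σw ^ 2 • ∑' k : ℕ, (A + B * K) ^ k * ((A + B * K)ᵀ) ^ k

/-- The lifted covariance `Σ̃_Θ = [I; K] Σ_Θ [I; K]ᵀ`. -/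
noncomputable def clCovTilde {n m : ℕ} (A : Matrix (Fin n) (Fin n) ℝ)
    (B : Matrix (Fin n) (Fin m) ℝ) (K : Matrix (Fin m) (Fin n) ℝ) (σw : ℝ) :
    Matrix (Fin n ⊕ Fin m) (Fin n ⊕ Fin m) ℝ :=
  fromRows (1 : Matrix (Fin n) (Fin n) ℝ) K * clCov A B K σw *
    (fromRows (1 : Matrix (Fin n) (Fin n) ℝ) K)ᵀ

open Finset Topology

-- The normed-space structure makes the Frobenius uniformity complete (finite dimension).
attribute [local instance] Matrix.frobeniusNormedAddCommGroup Matrix.frobeniusNormedSpace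

section Frobenius

variable {α β κ ι : Type*} [Fintype α] [Fintype β] [Fintype κ] [Fintype ι]

theorem frob_eq_norm (A : Matrix α β ℝ) : frob A = ‖A‖ := by
  rw [frobenius_norm_def, frob, Real.sqrt_eq_rpow]
  congr 1
  refine sum_congr rfl fun i _ => sum_congr rfl fun j _ => ?_
  rw [Real.norm_eq_abs, ← sq_abs, ← Real.rpow_natCast]
  norm_num

theorem frobenius_norm_sq_eq_sum_sq (A : Matrix α β ℝ) : ‖A‖ ^ 2 = ∑ i, ∑ j, A i j ^ 2 := by
  rw [← frob_eq_norm, frob, Real.sq_sqrt (by positivity)]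

theorem trace_mul_transpose (A B : Matrix α β ℝ) :
    (A * Bᵀ).trace = ∑ i, ∑ j, A i j * B i j := by
  simp [trace, mul_apply]

theorem frobenius_norm_sq_eq_trace_mul_transpose (A : Matrix α β ℝ) : ‖A‖ ^ 2 = (A * Aᵀ).trace := by
  rw [frobenius_norm_sq_eq_sum_sq, trace_mul_transpose]
  simp only [sq]

theorem abs_trace_mul_transpose_le (A B : Matrix α β ℝ) : |(A * Bᵀ).trace| ≤ ‖A‖ * ‖B‖ := by
  refine abs_le_of_sq_le_sq ?_ (by positivity)
  rw [trace_mul_transpose, mul_pow, frobenius_norm_sq_eq_sum_sq, frobenius_norm_sq_eq_sum_sq]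
  simp only [← sum_product']
  exact sum_mul_sq_le_sq_mul_sq _ _ _

theorem frobenius_norm_mul_mul_transpose_le (P : Matrix α β ℝ) (E : Matrix β β ℝ) :
    ‖P * E * Pᵀ‖ ≤ ‖P‖ ^ 2 * ‖E‖ := by
  calc ‖P * E * Pᵀ‖ ≤ ‖P * E‖ * ‖Pᵀ‖ := frobenius_norm_mul _ _
    _ ≤ ‖P‖ * ‖E‖ * ‖P‖ := by
      rw [frobenius_norm_transpose]; gcongr; exact frobenius_norm_mul _ _
    _ = ‖P‖ ^ 2 * ‖E‖ := by ring

theorem Matrix.PosSemidef.abs_trace_mul_le [DecidableEq α] {S : Matrix α α ℝ}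
    (hS : S.PosSemidef) (X : Matrix α α ℝ) : |(X * S).trace| ≤ ‖X‖ * S.trace := by
  obtain ⟨G, rfl⟩ : ∃ G : Matrix α α ℝ, S = Gᵀ * G := by
    open scoped MatrixOrder in
    simpa [star_eq_conjTranspose] using CStarAlgebra.nonneg_iff_eq_star_mul_self.mp hS.nonneg
  calc |(X * (Gᵀ * G)).trace| = |(G * X * Gᵀ).trace| := by
        rw [← Matrix.mul_assoc, trace_mul_comm, Matrix.mul_assoc]
    _ ≤ ‖G * X‖ * ‖G‖ := abs_trace_mul_transpose_le _ _
    _ ≤ ‖G‖ * ‖X‖ * ‖G‖ := by gcongr; exact frobenius_norm_mul _ _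
    _ = ‖X‖ * (Gᵀ * G).trace := by
      rw [trace_mul_comm, ← frobenius_norm_sq_eq_trace_mul_transpose]; ring

theorem abs_trace_mul_conj_le [DecidableEq ι] (M : Matrix κ κ ℝ) (P : Matrix κ α ℝ)
    (U V : Matrix α ι ℝ) {S : Matrix ι ι ℝ} (hS : S.PosSemidef) :
    |(M * (P * (U * S * Vᵀ) * Pᵀ)).trace| ≤ ‖M‖ * ‖P‖ ^ 2 * ‖U‖ * ‖V‖ * S.trace := by
  have hcycle : (M * (P * (U * S * Vᵀ) * Pᵀ)).trace = (Vᵀ * Pᵀ * M * P * U * S).trace := by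
    rw [show Vᵀ * Pᵀ * M * P * U * S = (Vᵀ * Pᵀ) * (M * P * U * S) by
      simp only [Matrix.mul_assoc], trace_mul_comm (Vᵀ * Pᵀ)]
    simp only [Matrix.mul_assoc]
  have hnorm : ‖Vᵀ * Pᵀ * M * P * U‖ ≤ ‖V‖ * ‖P‖ * ‖M‖ * ‖P‖ * ‖U‖ := by
    calc ‖Vᵀ * Pᵀ * M * P * U‖ ≤ ‖Vᵀ‖ * ‖Pᵀ‖ * ‖M‖ * ‖P‖ * ‖U‖ := by
          refine (frobenius_norm_mul _ _).trans ?_; gcongr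
          refine (frobenius_norm_mul _ _).trans ?_; gcongr
          refine (frobenius_norm_mul _ _).trans ?_; gcongr
          exact frobenius_norm_mul _ _
      _ = ‖V‖ * ‖P‖ * ‖M‖ * ‖P‖ * ‖U‖ := by simp only [frobenius_norm_transpose]
  rw [hcycle]
  calc |(Vᵀ * Pᵀ * M * P * U * S).trace| ≤ ‖Vᵀ * Pᵀ * M * P * U‖ * S.trace :=
        hS.abs_trace_mul_le _
    _ ≤ ‖V‖ * ‖P‖ * ‖M‖ * ‖P‖ * ‖U‖ * S.trace := by gcongr; exact hS.trace_nonneg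
    _ = ‖M‖ * ‖P‖ ^ 2 * ‖U‖ * ‖V‖ * S.trace := by ring

theorem Matrix.PosSemidef.of_hasSum {ν : Type*} {f : ν → Matrix α α ℝ} {X : Matrix α α ℝ}
    (hf : HasSum f X) (hpsd : ∀ k, (f k).PosSemidef) : X.PosSemidef := by
  refine .of_dotProduct_mulVec_nonneg ?_ fun x => ?_
  · refine (hf.map (conjTransposeAddEquiv α α ℝ) continuous_id.matrix_conjTranspose).unique ?_
    convert hf using 1
    exact funext fun k => (hpsd k).isHermitian.eq
  · let q : Matrix α α ℝ →+ ℝ :=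
      AddMonoidHom.mk' (fun M => star x ⬝ᵥ M *ᵥ x) fun M N => by
        simp [add_mulVec, dotProduct_add]
    have hq : Continuous q :=
      continuous_const.dotProduct (continuous_id.matrix_mulVec continuous_const)
    exact (hf.map q hq).nonneg fun k => (hpsd k).dotProduct_mulVec_nonneg x

end Frobenius

section Stein

variable {ι : Type*} [Fintype ι] [DecidableEq ι] {L E X : Matrix ι ι ℝ} {C ρ : ℝ}

theorem sq_norm_pow_le (hL : ∀ k, ‖L ^ k‖ ≤ C * ρ ^ k) (k : ℕ) :
    ‖L ^ k‖ ^ 2 ≤ C ^ 2 * (ρ ^ 2) ^ k := by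
  rw [← pow_mul, mul_comm 2 k, pow_mul, ← mul_pow]
  exact pow_le_pow_left₀ (norm_nonneg _) (hL k) 2

theorem summable_pow_mul_mul_transpose_pow (hρ : |ρ| < 1) (hL : ∀ k, ‖L ^ k‖ ≤ C * ρ ^ k)
    (E : Matrix ι ι ℝ) : Summable fun k => L ^ k * E * (L ^ k)ᵀ := by
  have hρ2 : ρ ^ 2 < 1 := (sq_lt_one_iff_abs_lt_one ρ).mpr hρ
  refine .of_norm_bounded ((summable_geometric_of_lt_one (sq_nonneg ρ) hρ2).mul_left
    (C ^ 2 * ‖E‖)) fun k => ?_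
  calc ‖L ^ k * E * (L ^ k)ᵀ‖ ≤ ‖L ^ k‖ ^ 2 * ‖E‖ := frobenius_norm_mul_mul_transpose_le _ _
    _ ≤ C ^ 2 * (ρ ^ 2) ^ k * ‖E‖ := by gcongr; exact sq_norm_pow_le hL k
    _ = C ^ 2 * ‖E‖ * (ρ ^ 2) ^ k := by ring

theorem stein_eq_of_hasSum (h : HasSum (fun k => L ^ k * E * (L ^ k)ᵀ) X) :
    X = L * X * Lᵀ + E := by
  have hshift : HasSum (fun k => L ^ (k + 1) * E * (L ^ (k + 1))ᵀ) (X - E) := by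
    simpa using (hasSum_nat_add_iff' 1).mpr h
  have hshift_eq : (fun k => L ^ (k + 1) * E * (L ^ (k + 1))ᵀ) =
      fun k => L * (L ^ k * E * (L ^ k)ᵀ) * Lᵀ := by
    funext k
    rw [pow_succ', transpose_mul]
    simp only [Matrix.mul_assoc]
  rw [hshift_eq] at hshift
  rw [((h.mul_left L).mul_right Lᵀ).unique hshift, sub_add_cancel]

theorem hasSum_of_stein_eq (hρ : |ρ| < 1) (hL : ∀ k, ‖L ^ k‖ ≤ C * ρ ^ k)
    (hX : X = L * X * Lᵀ + E) : HasSum (fun k => L ^ k * E * (L ^ k)ᵀ) X := by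
  have hLX : L * X * Lᵀ = X - E := eq_sub_of_add_eq hX.symm
  have hpartial : ∀ N, ∑ k ∈ range N, L ^ k * E * (L ^ k)ᵀ = X - L ^ N * X * (L ^ N)ᵀ := by
    intro N
    induction N with
    | zero => simp
    | succ N ih =>
      rw [sum_range_succ, ih, pow_succ, transpose_mul,
        show L ^ N * L * X * (Lᵀ * (L ^ N)ᵀ) = L ^ N * (L * X * Lᵀ) * (L ^ N)ᵀ by
          simp only [Matrix.mul_assoc], hLX]
      noncomm_ring
  have hpow : Tendsto (fun N => L ^ N) atTop (𝓝 0) :=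
    squeeze_zero_norm hL (by simpa using (tendsto_pow_atTop_nhds_zero_of_abs_lt_one hρ).const_mul C)
  have hrem : Tendsto (fun N => L ^ N * X * (L ^ N)ᵀ) atTop (𝓝 0) := by
    have hcont : Continuous fun P : Matrix ι ι ℝ => P * X * Pᵀ :=
      (continuous_id.matrix_mul continuous_const).matrix_mul continuous_id.matrix_transpose
    simpa [Function.comp_def] using (hcont.tendsto 0).comp hpow
  rw [(summable_pow_mul_mul_transpose_pow hρ hL E).hasSum_iff_tendsto_nat, funext hpartial]
  simpa using tendsto_const_nhds.sub hrem

theorem abs_trace_mul_le_of_hasSum (hρ : |ρ| < 1) (hL : ∀ k, ‖L ^ k‖ ≤ C * ρ ^ k)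
    (hX : HasSum (fun k => L ^ k * E * (L ^ k)ᵀ) X) {M : Matrix ι ι ℝ} {c : ℝ} (hc : 0 ≤ c)
    (hE : ∀ P : Matrix ι ι ℝ, |(M * (P * E * Pᵀ)).trace| ≤ c * ‖P‖ ^ 2) :
    |(M * X).trace| ≤ c * C ^ 2 / (1 - ρ ^ 2) := by
  have hρ2 : ρ ^ 2 < 1 := (sq_lt_one_iff_abs_lt_one ρ).mpr hρ
  have htrace : HasSum (fun k => (M * (L ^ k * E * (L ^ k)ᵀ)).trace) (M * X).trace :=
    (hX.mul_left M).map (traceAddMonoidHom ι ℝ) continuous_id.matrix_trace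
  have hgeom : HasSum (fun k => c * C ^ 2 * (ρ ^ 2) ^ k) (c * C ^ 2 / (1 - ρ ^ 2)) := by
    simpa [div_eq_mul_inv] using (hasSum_geometric_of_lt_one (sq_nonneg ρ) hρ2).mul_left (c * C ^ 2)
  simpa only [Real.norm_eq_abs] using htrace.norm_le_of_bounded hgeom fun k => by
    calc ‖(M * (L ^ k * E * (L ^ k)ᵀ)).trace‖ ≤ c * ‖L ^ k‖ ^ 2 := hE _
      _ ≤ c * (C ^ 2 * (ρ ^ 2) ^ k) := by gcongr; exact sq_norm_pow_le hL k
      _ = c * C ^ 2 * (ρ ^ 2) ^ k := by ring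

end Stein

section Covariance

variable {n m : ℕ} (A : Matrix (Fin n) (Fin n) ℝ) (B : Matrix (Fin n) (Fin m) ℝ)
  (K : Matrix (Fin m) (Fin n) ℝ) (σw : ℝ) {C ρ : ℝ}

theorem hasSum_clCov (hρ : |ρ| < 1) (hL : ∀ k, ‖(A + B * K) ^ k‖ ≤ C * ρ ^ k) :
    HasSum (fun k => (A + B * K) ^ k * (σw ^ 2 • 1) * ((A + B * K) ^ k)ᵀ) (clCov A B K σw) := by
  simpa [clCov, transpose_pow] using
    ((summable_pow_mul_mul_transpose_pow hρ hL 1).hasSum).const_smul (σw ^ 2)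

theorem clCov_eq_stein (hρ : |ρ| < 1) (hL : ∀ k, ‖(A + B * K) ^ k‖ ≤ C * ρ ^ k) :
    clCov A B K σw = (A + B * K) * clCov A B K σw * (A + B * K)ᵀ + σw ^ 2 • 1 :=
  stein_eq_of_hasSum (hasSum_clCov A B K σw hρ hL)

theorem clCov_posSemidef (hρ : |ρ| < 1) (hL : ∀ k, ‖(A + B * K) ^ k‖ ≤ C * ρ ^ k) :
    (clCov A B K σw).PosSemidef :=
  .of_hasSum (hasSum_clCov A B K σw hρ hL) fun k => by
    simpa [conjTranspose_eq_transpose_of_trivial] using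
      (PosSemidef.one.smul (sq_nonneg σw)).mul_mul_conjTranspose_same ((A + B * K) ^ k)

theorem clCovTilde_posSemidef (hρ : |ρ| < 1) (hL : ∀ k, ‖(A + B * K) ^ k‖ ≤ C * ρ ^ k) :
    (clCovTilde A B K σw).PosSemidef := by
  rw [clCovTilde, ← conjTranspose_eq_transpose_of_trivial]
  exact (clCov_posSemidef A B K σw hρ hL).mul_mul_conjTranspose_same _

end Covariance

section Perturbation

variable {α β : Type*} [Fintype α] [Fintype β]

theorem fromCols_mul_fromRows_one {R γ : Type*} [Semiring R] [DecidableEq α] (A : Matrix γ α R)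
    (B : Matrix γ β R) (K : Matrix β α R) :
    fromCols A B * fromRows (1 : Matrix α α R) K = A + B * K := by
  rw [fromCols_mul_fromRows, Matrix.mul_one]

theorem sub_eq_stein_of_stein {Θ₁ Θ₂ : Matrix α β ℝ} {J : Matrix β α ℝ} {X₁ X₂ W : Matrix α α ℝ}
    (h₁ : X₁ = Θ₁ * J * X₁ * (Θ₁ * J)ᵀ + W) (h₂ : X₂ = Θ₂ * J * X₂ * (Θ₂ * J)ᵀ + W) :
    X₂ - X₁ = Θ₂ * J * (X₂ - X₁) * (Θ₂ * J)ᵀ +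
      ((Θ₂ - Θ₁) * (J * X₁ * Jᵀ) * Θ₂ᵀ + Θ₁ * (J * X₁ * Jᵀ) * (Θ₂ - Θ₁)ᵀ) := by
  conv_lhs => rw [h₁, h₂]
  simp only [transpose_mul, transpose_sub, Matrix.mul_sub, Matrix.sub_mul, Matrix.mul_assoc]
  abel

theorem abs_trace_mul_conj_forcing_le [DecidableEq β] {S : Matrix β β ℝ} (hS : S.PosSemidef)
    (M P : Matrix α α ℝ) (Δ Θ₁ Θ₂ : Matrix α β ℝ) :
    |(M * (P * (Δ * S * Θ₂ᵀ + Θ₁ * S * Δᵀ) * Pᵀ)).trace| ≤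
      ‖M‖ * ‖Δ‖ * (‖Θ₁‖ + ‖Θ₂‖) * S.trace * ‖P‖ ^ 2 := by
  rw [Matrix.mul_add, Matrix.add_mul, Matrix.mul_add, trace_add]
  have h₁ := abs_trace_mul_conj_le M P Δ Θ₂ hS
  have h₂ := abs_trace_mul_conj_le M P Θ₁ Δ hS
  calc _ ≤ _ := abs_add_le _ _
    _ ≤ _ := add_le_add h₁ h₂
    _ = _ := by ring

theorem norm_add_transpose_mul_mul_le (Q : Matrix α α ℝ) (R : Matrix β β ℝ) (K : Matrix β α ℝ) :
    ‖Q + Kᵀ * R * K‖ ≤ ‖Q‖ + ‖K‖ ^ 2 * ‖R‖ := by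
  calc ‖Q + Kᵀ * R * K‖ ≤ ‖Q‖ + ‖Kᵀ * R * K‖ := norm_add_le _ _
    _ ≤ ‖Q‖ + ‖Kᵀ‖ * ‖R‖ * ‖K‖ := by
      gcongr
      refine (frobenius_norm_mul _ _).trans ?_
      gcongr
      exact frobenius_norm_mul _ _
    _ = ‖Q‖ + ‖K‖ ^ 2 * ‖R‖ := by rw [frobenius_norm_transpose]; ring

theorem hasSum_clCov_sub_clCov {n m : ℕ} (Ahat Astar : Matrix (Fin n) (Fin n) ℝ)
    (Bhat Bstar : Matrix (Fin n) (Fin m) ℝ) (K : Matrix (Fin m) (Fin n) ℝ) (σw : ℝ) {C ρ : ℝ}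
    (hρ : |ρ| < 1) (hhat : ∀ k, ‖(Ahat + Bhat * K) ^ k‖ ≤ C * ρ ^ k)
    (hstar : ∀ k, ‖(Astar + Bstar * K) ^ k‖ ≤ C * ρ ^ k) :
    HasSum (fun k => (Astar + Bstar * K) ^ k *
        ((fromCols Astar Bstar - fromCols Ahat Bhat) * clCovTilde Ahat Bhat K σw *
            (fromCols Astar Bstar)ᵀ +
          fromCols Ahat Bhat * clCovTilde Ahat Bhat K σw *
            (fromCols Astar Bstar - fromCols Ahat Bhat)ᵀ) *
        ((Astar + Bstar * K) ^ k)ᵀ)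
      (clCov Astar Bstar K σw - clCov Ahat Bhat K σw) := by
  have hstein := sub_eq_stein_of_stein
    ((fromCols_mul_fromRows_one Ahat Bhat K).symm ▸ clCov_eq_stein Ahat Bhat K σw hρ hhat)
    ((fromCols_mul_fromRows_one Astar Bstar K).symm ▸ clCov_eq_stein Astar Bstar K σw hρ hstar)
  rw [fromCols_mul_fromRows_one] at hstein
  exact hasSum_of_stein_eq hρ hstar hstein

end Perturbation

theorem cost_difference_bound_crude_general {n m : ℕ}
    (Ahat Astar : Matrix (Fin n) (Fin n) ℝ) (Bhat Bstar : Matrix (Fin n) (Fin m) ℝ)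
    (K : Matrix (Fin m) (Fin n) ℝ) (Kbar C ρ σw lam D : ℝ)
    (Q : Matrix (Fin n) (Fin n) ℝ) (R : Matrix (Fin m) (Fin m) ℝ)
    (hK : frob K ≤ Kbar) (hρ : ρ ∈ Set.Ioo (0 : ℝ) 1)
    (hhat : ∀ k : ℕ, frob ((Ahat + Bhat * K) ^ k) ≤ C * ρ ^ k)
    (hstar : ∀ k : ℕ, frob ((Astar + Bstar * K) ^ k) ≤ C * ρ ^ k)
    (hdiff : frob (fromCols Ahat Bhat - fromCols Astar Bstar) ≤ 2 / lam)
    (hstarnorm : frob (fromCols Astar Bstar) ≤ D + 1 / lam) :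
    |((Q + Kᵀ * R * K) * (clCov Astar Bstar K σw - clCov Ahat Bhat K σw)).trace|
      ≤ (1 / lam) * (D + 2 / lam) *
          (4 * C ^ 2 * (frob Q + Kbar ^ 2 * frob R) / (1 - ρ ^ 2)) *
          (clCovTilde Ahat Bhat K σw).trace := by
  simp only [frob_eq_norm] at hK hhat hstar hdiff hstarnorm ⊢
  have hρabs : |ρ| < 1 := abs_lt.mpr ⟨by linarith [hρ.1], hρ.2⟩
  have hS := clCovTilde_posSemidef Ahat Bhat K σw hρabs hhat
  have hbound := abs_trace_mul_le_of_hasSum hρabs hstar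
    (hasSum_clCov_sub_clCov Ahat Astar Bhat Bstar K σw hρabs hhat hstar)
    (by have := hS.trace_nonneg; positivity)
    (abs_trace_mul_conj_forcing_le hS (Q + Kᵀ * R * K) · _ _ _)
  have hM : ‖Q + Kᵀ * R * K‖ ≤ ‖Q‖ + Kbar ^ 2 * ‖R‖ := by
    refine (norm_add_transpose_mul_mul_le Q R K).trans ?_
    gcongr
  have hΔ : ‖fromCols Astar Bstar - fromCols Ahat Bhat‖ ≤ 2 / lam := by rwa [norm_sub_rev]
  have hΘ : ‖fromCols Ahat Bhat‖ + ‖fromCols Astar Bstar‖ ≤ 2 * (D + 2 / lam) := by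
    linarith [norm_sub_norm_le (fromCols Ahat Bhat) (fromCols Astar Bstar),
      show 2 / lam = 2 * (1 / lam) by ring]
  have hρ2 : 0 < 1 - ρ ^ 2 := by nlinarith [hρ.1, hρ.2]
  calc _ ≤ _ := hbound
    _ ≤ (‖Q‖ + Kbar ^ 2 * ‖R‖) * (2 / lam) * (2 * (D + 2 / lam)) *
          (clCovTilde Ahat Bhat K σw).trace * C ^ 2 / (1 - ρ ^ 2) := by
      gcongr
      · exact hS.trace_nonneg
      · exact mul_nonneg ((norm_nonneg _).trans hM) ((norm_nonneg _).trans hΔ)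
    _ = _ := by ring

theorem cost_difference_bound_crude {n m : ℕ}
    (Ahat Astar : Matrix (Fin n) (Fin n) ℝ) (Bhat Bstar : Matrix (Fin n) (Fin m) ℝ)
    (K : Matrix (Fin m) (Fin n) ℝ) (Kbar C ρ σw lam D : ℝ)
    (Q : Matrix (Fin n) (Fin n) ℝ) (R : Matrix (Fin m) (Fin m) ℝ)
    (hK : frob K ≤ Kbar) (hC : 1 ≤ C) (hρ : ρ ∈ Set.Ioo (0 : ℝ) 1)
    (hhat : ∀ k : ℕ, frob ((Ahat + Bhat * K) ^ k) ≤ C * ρ ^ k)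
    (hstar : ∀ k : ℕ, frob ((Astar + Bstar * K) ^ k) ≤ C * ρ ^ k)
    (hσ : 0 < σw) (hQ : Q.IsSymm) (hR : R.IsSymm) (hlam : 0 < lam) (hD : 0 ≤ D)
    (hdiff : frob (fromCols Ahat Bhat - fromCols Astar Bstar) ≤ 2 / lam)
    (hstarnorm : frob (fromCols Astar Bstar) ≤ D + 1 / lam) :
    |((Q + Kᵀ * R * K) * (clCov Astar Bstar K σw - clCov Ahat Bhat K σw)).trace|
      ≤ (1 / lam) * (D + 2 / lam) *
          (4 * C ^ 2 * (frob Q + Kbar ^ 2 * frob R) / (1 - ρ ^ 2)) *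
          (clCovTilde Ahat Bhat K σw).trace :=
  cost_difference_bound_crude_general Ahat Astar Bhat Bstar K Kbar C ρ σw lam D Q R hK hρ hhat hstar
    hdiff hstarnorm
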